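/- Deterministic primal–dual distance bound. Consider min_{y,z} f(y) + g(z) subject to H_y y + H_z z = d, where f : ℝ^n → ℝ is continuous and strongly convex with parameter σ_f > 0, g : ℝ^{n_z} → ℝ is convex and continuous, H_y ∈ ℝ^{p×n}, H_z ∈ ℝ^{p×n_z}, d ∈ ℝ^p. Let (y*, z*) be an optimal solution, let D(μ) = −f⋆(H_yᵀμ) − g⋆(H_zᵀμ) + ⟨d, μ⟩ be the dual function, let μ* maximize D, and assume strong duality D(μ*) = f(y*) + g(z*). For μ ∈ ℝ^p let ŷ(μ) be the unique minimizer of y ↦ f(y) − ⟨μ, H_y y⟩. Then for every μ ∈ ℝ^p with D(μ) > −∞, ‖ŷ(μ) − y*‖² ≤ (2/σ_f) (D(μ*) − D(μ)). -/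

import Mathlib

open scoped RealInnerProductSpace
open Matrix

/-- The Fenchel conjugate `g⋆(y) = sup_x (⟨y,x⟩ − g(x))`, with values in `ℝ ∪ {+∞}`. -/
noncomputable def fconj {q : ℕ} (g : EuclideanSpace ℝ (Fin q) → ℝ)
    (y : EuclideanSpace ℝ (Fin q)) : EReal :=
  ⨆ x, ((⟪y, x⟫ - g x : ℝ) : EReal)

/-- The Fenchel conjugate as a real-valued function (valid whenever the supremum is
finite, which holds for continuous strongly convex `f`). -/
noncomputable def realConj {q : ℕ} (f : EuclideanSpace ℝ (Fin q) → ℝ)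
    (y : EuclideanSpace ℝ (Fin q)) : ℝ :=
  ⨆ x, (⟪y, x⟫ - f x)

/-- `h` is strongly convex with parameter `σ`. -/
def StronglyConvexWith {E : Type*} [NormedAddCommGroup E] [NormedSpace ℝ E]
    (σ : ℝ) (h : E → ℝ) : Prop :=
  ∀ x y : E, ∀ l : ℝ, 0 ≤ l → l ≤ 1 →
    h (l • x + (1 - l) • y) ≤ l * h x + (1 - l) * h y - σ / 2 * (l * (1 - l) * ‖x - y‖ ^ 2)

/-! With `w = H_yᵀ μ`, the point `ŷ(μ)` minimizes the `σ_f`-strongly convex function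
`f - ⟪w, ·⟫`, so `f⋆(w) = ⟪w, ŷ(μ)⟫ - f(ŷ(μ))` and the Fenchel–Young gap
`f(y*) + f⋆(w) - ⟪w, y*⟫` is at least `σ_f / 2 * ‖ŷ(μ) - y*‖²`. Bounding `g⋆(H_zᵀ μ)` below by
the value of its supremand at `z*` and using `H_y y* + H_z z* = d`, this gap is at most
`f(y*) + g(z*) - D(μ) = D(μ*) - D(μ)`. -/

open Set Filter Topology

theorem StronglyConvexWith.strongConvexOn {E : Type*} [NormedAddCommGroup E] [NormedSpace ℝ E]
    {σ : ℝ} {h : E → ℝ} (hh : StronglyConvexWith σ h) : StrongConvexOn univ σ h := by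
  refine ⟨convex_univ, fun x _ y _ a b ha hb hab => ?_⟩
  obtain rfl : b = 1 - a := by linarith
  have := hh x y a ha (by linarith)
  simp only [smul_eq_mul]
  linarith

theorem StrongConvexOn.half_mul_sq_norm_sub_le_of_isMinOn {E : Type*} [NormedAddCommGroup E]
    [NormedSpace ℝ E] {s : Set E} {σ : ℝ} {f : E → ℝ} (hf : StrongConvexOn s σ f) {x y : E}
    (hx : x ∈ s) (hy : y ∈ s) (hmin : IsMinOn f s x) :
    σ / 2 * ‖x - y‖ ^ 2 ≤ f y - f x := by
  -- Divide the strong convexity inequality at `(1 - t) • x + t • y` by `t`, then let `t → 0`.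
  have hlim : Tendsto (fun t : ℝ => (1 - t) * (σ / 2 * ‖x - y‖ ^ 2)) (𝓝[>] 0)
      (𝓝 (σ / 2 * ‖x - y‖ ^ 2)) := by
    have : Continuous fun t : ℝ => (1 - t) * (σ / 2 * ‖x - y‖ ^ 2) := by fun_prop
    simpa using (this.tendsto 0).mono_left nhdsWithin_le_nhds
  refine le_of_tendsto hlim ?_
  filter_upwards [Ioo_mem_nhdsGT one_pos] with t ⟨ht0, ht1⟩
  have hconv := hf.2 hx hy (by linarith : 0 ≤ 1 - t) ht0.le (by ring)
  have hle := isMinOn_iff.1 hmin _ (hf.1 hx hy (by linarith : 0 ≤ 1 - t) ht0.le (by ring))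
  simp only [smul_eq_mul] at hconv
  refine le_of_mul_le_mul_left ?_ ht0
  linarith

theorem StrongConvexOn.sub_inner {q : ℕ} {σ : ℝ} {f : EuclideanSpace ℝ (Fin q) → ℝ}
    (hf : StrongConvexOn univ σ f) (w : EuclideanSpace ℝ (Fin q)) :
    StrongConvexOn univ σ fun y => f y - ⟪w, y⟫ := by
  have hlin : UniformConcaveOn univ 0 fun y => ⟪w, y⟫ :=
    uniformConcaveOn_zero.2 ((innerₗ _ w).concaveOn convex_univ)
  have := hf.sub hlin
  rwa [add_zero] at this

theorem realConj_eq_of_isMinOn {q : ℕ} {f : EuclideanSpace ℝ (Fin q) → ℝ}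
    {w m : EuclideanSpace ℝ (Fin q)} (hm : IsMinOn (fun y => f y - ⟪w, y⟫) univ m) :
    realConj f w = ⟪w, m⟫ - f m := by
  have hle : ∀ y, ⟪w, y⟫ - f y ≤ ⟪w, m⟫ - f m := fun y => by
    have := isMinOn_iff.1 hm y (mem_univ y); linarith
  exact le_antisymm (ciSup_le hle) (le_ciSup ⟨_, forall_mem_range.2 hle⟩ m)

theorem inner_toLp_mulVec {k q : ℕ} (A : Matrix (Fin k) (Fin q) ℝ) (μ : EuclideanSpace ℝ (Fin k))
    (y : EuclideanSpace ℝ (Fin q)) :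
    ⟪μ, (WithLp.toLp 2 (A *ᵥ y) : EuclideanSpace ℝ (Fin k))⟫ = ⟪WithLp.toLp 2 (Aᵀ *ᵥ μ), y⟫ := by
  simp only [EuclideanSpace.inner_eq_star_dotProduct, star_trivial, mulVec_transpose]
  rw [dotProduct_comm, dotProduct_mulVec, dotProduct_comm]

theorem StrongConvexOn.half_mul_sq_norm_sub_le_realConj {q : ℕ} {σ : ℝ}
    {f : EuclideanSpace ℝ (Fin q) → ℝ} (hf : StrongConvexOn univ σ f)
    {w m : EuclideanSpace ℝ (Fin q)} (hm : IsMinOn (fun y => f y - ⟪w, y⟫) univ m)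
    (y : EuclideanSpace ℝ (Fin q)) :
    σ / 2 * ‖m - y‖ ^ 2 ≤ f y + realConj f w - ⟪w, y⟫ := by
  have := (hf.sub_inner w).half_mul_sq_norm_sub_le_of_isMinOn (mem_univ m) (mem_univ y) hm
  rw [realConj_eq_of_isMinOn hm]
  linarith

theorem primal_dual_distance_bound_general
    {n nz p : ℕ} (f : EuclideanSpace ℝ (Fin n) → ℝ) (σf : ℝ) (hσ : 0 < σf)
    (hf_sc : StronglyConvexWith σf f)
    (g : EuclideanSpace ℝ (Fin nz) → ℝ)
    (Hy : Matrix (Fin p) (Fin n) ℝ) (Hz : Matrix (Fin p) (Fin nz) ℝ)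
    (d : EuclideanSpace ℝ (Fin p))
    (ystar : EuclideanSpace ℝ (Fin n)) (zstar : EuclideanSpace ℝ (Fin nz))
    (hfeas : Hy.mulVec ystar + Hz.mulVec zstar = d)
    (D : EuclideanSpace ℝ (Fin p) → EReal)
    (hD : ∀ μ, D μ = - ((realConj f (WithLp.toLp 2 (Hyᵀ.mulVec μ)) : ℝ) : EReal) - fconj g (WithLp.toLp 2 (Hzᵀ.mulVec μ))
      + ((⟪d, μ⟫ : ℝ) : EReal))
    (μstar : EuclideanSpace ℝ (Fin p))
    (hsd : D μstar = ((f ystar + g zstar : ℝ) : EReal))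
    (yhat : EuclideanSpace ℝ (Fin p) → EuclideanSpace ℝ (Fin n))
    (hyhat_min : ∀ μ y, f (yhat μ) - ⟪μ, (WithLp.toLp 2 (Hy.mulVec (yhat μ)) : EuclideanSpace ℝ (Fin p))⟫ ≤
      f y - ⟪μ, (WithLp.toLp 2 (Hy.mulVec y) : EuclideanSpace ℝ (Fin p))⟫) :
    ∀ μ, D μ ≠ ⊥ →
      ((‖yhat μ - ystar‖ ^ 2 : ℝ) : EReal) ≤ ((2 / σf : ℝ) : EReal) * (D μstar - D μ) := by
  intro μ hμ
  set wy : EuclideanSpace ℝ (Fin n) := WithLp.toLp 2 (Hyᵀ *ᵥ μ)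
  set wz : EuclideanSpace ℝ (Fin nz) := WithLp.toLp 2 (Hzᵀ *ᵥ μ)
  have hmin : IsMinOn (fun y => f y - ⟪wy, y⟫) univ (yhat μ) :=
    isMinOn_univ_iff.2 fun y => by simpa only [inner_toLp_mulVec] using hyhat_min μ y
  have hgap := hf_sc.strongConvexOn.half_mul_sq_norm_sub_le_realConj hmin ystar
  have hz : ((⟪wz, zstar⟫ - g zstar : ℝ) : EReal) ≤ fconj g wz :=
    le_iSup (fun z => ((⟪wz, z⟫ - g z : ℝ) : EReal)) zstar
  have hd : ⟪d, μ⟫ = ⟪wy, ystar⟫ + ⟪wz, zstar⟫ := by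
    rw [← inner_toLp_mulVec, ← inner_toLp_mulVec, ← inner_add_right, real_inner_comm,
      ← WithLp.toLp_add, hfeas]
  have hconj_ne_top : fconj g wz ≠ ⊤ := fun h => hμ (by rw [hD, h]; simp)
  obtain ⟨G, hG⟩ : ∃ G : ℝ, fconj g wz = G :=
    ⟨_, (EReal.coe_toReal hconj_ne_top (ne_bot_of_le_ne_bot (EReal.coe_ne_bot _) hz)).symm⟩
  rw [hG, EReal.coe_le_coe_iff] at hz
  rw [hsd, hD, hG]
  norm_cast
  rw [div_mul_eq_mul_div, le_div_iff₀ hσ]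
  linarith

/-- Deterministic primal–dual distance bound: for every dual point `μ`
with `D(μ) > −∞`, the primal point `ŷ(μ)` satisfies
`‖ŷ(μ) − y*‖² ≤ (2/σ_f)(D(μ*) − D(μ))`. -/
theorem primal_dual_distance_bound
    {n nz p : ℕ} (f : EuclideanSpace ℝ (Fin n) → ℝ) (σf : ℝ) (hσ : 0 < σf)
    (hf_cont : Continuous f) (hf_sc : StronglyConvexWith σf f)
    (g : EuclideanSpace ℝ (Fin nz) → ℝ) (hg : ConvexOn ℝ Set.univ g) (hg_cont : Continuous g)
    (Hy : Matrix (Fin p) (Fin n) ℝ) (Hz : Matrix (Fin p) (Fin nz) ℝ)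
    (d : EuclideanSpace ℝ (Fin p))
    (ystar : EuclideanSpace ℝ (Fin n)) (zstar : EuclideanSpace ℝ (Fin nz))
    (hfeas : Hy.mulVec ystar + Hz.mulVec zstar = d)
    (hopt : ∀ (y : EuclideanSpace ℝ (Fin n)) (z : EuclideanSpace ℝ (Fin nz)),
      Hy.mulVec y + Hz.mulVec z = d → f ystar + g zstar ≤ f y + g z)
    (D : EuclideanSpace ℝ (Fin p) → EReal)
    (hD : ∀ μ, D μ = - ((realConj f (WithLp.toLp 2 (Hyᵀ.mulVec μ)) : ℝ) : EReal) - fconj g (WithLp.toLp 2 (Hzᵀ.mulVec μ))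
      + ((⟪d, μ⟫ : ℝ) : EReal))
    (μstar : EuclideanSpace ℝ (Fin p)) (hmax : ∀ μ, D μ ≤ D μstar)
    (hsd : D μstar = ((f ystar + g zstar : ℝ) : EReal))
    (yhat : EuclideanSpace ℝ (Fin p) → EuclideanSpace ℝ (Fin n))
    (hyhat_min : ∀ μ y, f (yhat μ) - ⟪μ, (WithLp.toLp 2 (Hy.mulVec (yhat μ)) : EuclideanSpace ℝ (Fin p))⟫ ≤
      f y - ⟪μ, (WithLp.toLp 2 (Hy.mulVec y) : EuclideanSpace ℝ (Fin p))⟫) :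
    ∀ μ, D μ ≠ ⊥ →
      ((‖yhat μ - ystar‖ ^ 2 : ℝ) : EReal) ≤ ((2 / σf : ℝ) : EReal) * (D μstar - D μ) :=
  primal_dual_distance_bound_general f σf hσ hf_sc g Hy Hz d ystar zstar hfeas D hD μstar hsd yhat
    hyhat_min
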